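/- arXiv:2512.25005 — 2 statements merged into one kernel-verified Lean document; each statement's English description precedes it below -/
import Mathlib

section
/- (Pole for a lone pair.) Let n ≥ 4 and let T be an MHV collection on {1,…,n}. Suppose the indices i and j occur together in exactly one triplet of T, namely (i,j,k) ∈ T. Let T′ be the collection of n−3 triplets on the index set {1,…,n} ∖ {j} obtained from T ∖ {(i,j,k)} by replacing every occurrence of the index j by i. Let φ : R → R be the ℚ-algebra homomorphism with φ(X_{1,j}) = X_{1,i}, φ(X_{2,j}) = X_{2,i}, and φ fixing all other indeterminates. Let M_{ijk}(T) denote the matrix M(T) with the row of the triplet (i,j,k) and the columns i, j, k deleted, and set N := det(M_{ijk}(T))² and Q := ⟨jk⟩ · ⟨ki⟩ · ∏_{(a,b,c) ∈ T∖{(i,j,k)}} ⟨ab⟩·⟨bc⟩·⟨ca⟩. Then: (a) ⟨ij⟩ · f_T = N / Q in ℚ(X); (b) φ(Q) ≠ 0; and (c) φ(N) / φ(Q) = − f_{T′}. -/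
open MvPolynomial

/-- The polynomial ring `ℚ[X_{m,i} : m ∈ {1,2}, 1 ≤ i ≤ n]` in `2n` indeterminates. -/
abbrev MHV.Poly (n : ℕ) := MvPolynomial (Fin 2 × Fin n) ℚ

/-- The field of fractions `ℚ(X)`. -/
abbrev MHV.FF (n : ℕ) := FractionRing (MHV.Poly n)

namespace MHV

variable {n : ℕ}

/-- The bracket `⟨ij⟩ = X_{1,i}·X_{2,j} − X_{1,j}·X_{2,i}`. -/
noncomputable def bra (i j : Fin n) : Poly n :=
  X ((0 : Fin 2), i) * X ((1 : Fin 2), j) - X ((0 : Fin 2), j) * X ((1 : Fin 2), i)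

/-- A triplet: an ordered triple of indices. -/
abbrev Triplet (n : ℕ) := Fin n × Fin n × Fin n

/-- The entries of a triplet are pairwise distinct. -/
def Triplet.Distinct (t : Triplet n) : Prop :=
  t.1 ≠ t.2.1 ∧ t.1 ≠ t.2.2 ∧ t.2.1 ≠ t.2.2

/-- The set of indices used by a triplet. -/
def Triplet.indices (t : Triplet n) : Finset (Fin n) := {t.1, t.2.1, t.2.2}

/-- A triplet on the index set `I`: pairwise distinct entries, all belonging to `I`. -/
def Triplet.OnSet (I : Finset (Fin n)) (t : Triplet n) : Prop :=
  t.Distinct ∧ t.indices ⊆ I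

/-- The row of the matrix `M(S)` corresponding to the triplet `t = (a,b,c)`:
entry `⟨bc⟩` in column `a`, `⟨ca⟩` in column `b`, `⟨ab⟩` in column `c`, `0` elsewhere. -/
noncomputable def rowEntry (t : Triplet n) (c : Fin n) : Poly n :=
  if c = t.1 then bra t.2.1 t.2.2
  else if c = t.2.1 then bra t.2.2 t.1
  else if c = t.2.2 then bra t.1 t.2.1
  else 0

/-- The determinant of the matrix whose rows are indexed by the triplets of `S` and
whose columns are the columns of `M(S)` belonging to `cols` (in increasing order). -/
noncomputable def detCols (S : List (Triplet n)) (cols : Finset (Fin n)) : Poly n :=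
  Matrix.det (Matrix.of fun r c : Fin S.length =>
    ((cols.sort (· ≤ ·))[c.1]?).elim 0 (rowEntry (S.get r)))

/-- The determinant of `M_{ab}(S)`: the matrix `M(S)` (columns indexed by `I`)
with columns `a` and `b` deleted. -/
noncomputable def Mdet (S : List (Triplet n)) (I : Finset (Fin n)) (a b : Fin n) : Poly n :=
  detCols S ((I.erase a).erase b)

/-- The product `∏_{(a,b,c) ∈ S} ⟨ab⟩·⟨bc⟩·⟨ca⟩`. -/
noncomputable def denom (S : List (Triplet n)) : Poly n :=
  (S.map fun t => bra t.1 t.2.1 * bra t.2.1 t.2.2 * bra t.2.2 t.1).prod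

/-- The canonical map from the polynomial ring to its field of fractions. -/
noncomputable def toFF : Poly n →+* FF n := algebraMap (Poly n) (FF n)

/-- The form `f_S = det(M_{ab}(S))² / (⟨ab⟩² · ∏_{(a,b,c) ∈ S} ⟨ab⟩⟨bc⟩⟨ca⟩)`,
where `(a,b)` is the pair of the two smallest elements of `I`. -/
noncomputable def fForm (S : List (Triplet n)) (I : Finset (Fin n)) : FF n :=
  if h : 2 ≤ I.card then
    have h1 : I.Nonempty := Finset.card_pos.mp (by omega)
    have h2 : (I.erase (I.min' h1)).Nonempty := by
      rw [← Finset.card_pos, Finset.card_erase_of_mem (I.min'_mem h1)]; omega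
    toFF (Mdet S I (I.min' h1) ((I.erase (I.min' h1)).min' h2)) ^ 2 /
      (toFF (bra (I.min' h1) ((I.erase (I.min' h1)).min' h2)) ^ 2 * toFF (denom S))
  else 0

/-- The set of all indices used by the triplets of `S`. -/
def indexSet (S : List (Triplet n)) : Finset (Fin n) :=
  S.foldr (fun t acc => t.indices ∪ acc) ∅

/-- The non-vanishing condition: every nonempty subcollection consisting of `d` triplets
contains at least `d+2` distinct indices in total. -/
def NonVanishing (T : List (Triplet n)) : Prop :=
  ∀ S : List (Triplet n), S.Sublist T → S ≠ [] → S.length + 2 ≤ (indexSet S).card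

/-- An MHV collection on `{1,…,n}`: a list of `n−2` triplets with pairwise
distinct entries (triplets on the full index set). -/
def IsMHV (n : ℕ) (T : List (Triplet n)) : Prop :=
  T.length = n - 2 ∧ ∀ t ∈ T, t.Distinct

/-- The unordered pair `{i,j}` belongs to the doublet set `D(T)`:
`i` and `j` occur together in an odd number of triplets of `T`. -/
def InDoublets (T : List (Triplet n)) (i j : Fin n) : Prop :=
  Odd (T.countP fun t => decide (i ∈ t.indices ∧ j ∈ t.indices))

end MHV

namespace MHV

variable {n : ℕ}

-- ### new material

lemma bra_anti (i j : Fin n) : bra i j = - bra j i := by unfold bra; ring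

lemma bra_self (i : Fin n) : bra i i = 0 := by unfold bra; ring

lemma bra_sq_symm (i j : Fin n) : bra i j ^ 2 = bra j i ^ 2 := by
  rw [bra_anti]; ring

lemma bra_ne_zero {i j : Fin n} (h : i ≠ j) : bra i j ≠ 0 := by
  intro h0
  have := congrArg (eval (fun p : Fin 2 × Fin n =>
    if p = ((0 : Fin 2), i) then (1 : ℚ) else if p = ((1 : Fin 2), j) then 1 else 0)) h0
  simp only [bra, map_sub, map_mul, eval_X, map_zero] at this
  simp only [Prod.mk.injEq, show (1:Fin 2) ≠ 0 by decide, show (0:Fin 2) ≠ 1 by decide,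
    false_and, and_false, if_false, if_true, h, h.symm, and_true, true_and, if_pos rfl] at this
  norm_num at this

lemma rowEntry_eq_zero {t : Triplet n} {c : Fin n} (h : c ∉ t.indices) : rowEntry t c = 0 := by
  simp only [Triplet.indices, Finset.mem_insert, Finset.mem_singleton, not_or] at h
  simp [rowEntry, h.1, h.2.1, h.2.2]

lemma schouten (t : Triplet n) (ht : t.Distinct) (m : Fin 2) :
    ∑ c, rowEntry t c * X (m, c) = (0 : Poly n) := by
  obtain ⟨a, b, c⟩ := t
  obtain ⟨h1, h2, h3⟩ := ht
  simp only [ne_eq] at h1 h2 h3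
  have h1' : ¬ b = a := fun h => h1 h.symm
  have h2' : ¬ c = a := fun h => h2 h.symm
  have h3' : ¬ c = b := fun h => h3 h.symm
  have key : ∀ x : Fin n, rowEntry (a, b, c) x * X (m, x) =
      (if x = a then bra b c * X (m, a) else 0) +
      ((if x = b then bra c a * X (m, b) else 0) +
       (if x = c then bra a b * X (m, c) else 0)) := by
    intro x
    unfold rowEntry
    rcases eq_or_ne x a with rfl | hxa
    · simp [h1, h2, h1', h2']
    · rcases eq_or_ne x b with rfl | hxb
      · simp [hxa, h3, h1', h3']
      · rcases eq_or_ne x c with rfl | hxc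
        · simp [hxa, hxb]
        · simp [hxa, hxb, hxc]
  rw [Finset.sum_congr rfl fun x _ => key x]
  rw [Finset.sum_add_distrib, Finset.sum_add_distrib]
  rw [Finset.sum_ite_eq' Finset.univ a, Finset.sum_ite_eq' Finset.univ b,
    Finset.sum_ite_eq' Finset.univ c]
  simp only [Finset.mem_univ, if_pos]
  fin_cases m <;> unfold bra <;> simp only [Fin.mk_zero, Fin.mk_one] <;> ring

lemma rowEntry_mul_bra_sum (t : Triplet n) (ht : t.Distinct) (a : Fin n) :
    ∑ c, rowEntry t c * bra a c = (0 : Poly n) := by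
  have key : ∀ c : Fin n, rowEntry t c * bra a c =
      X ((0 : Fin 2), a) * (rowEntry t c * X ((1 : Fin 2), c))
        - X ((1 : Fin 2), a) * (rowEntry t c * X ((0 : Fin 2), c)) := by
    intro c; unfold bra; ring
  rw [Finset.sum_congr rfl fun c _ => key c, Finset.sum_sub_distrib,
    ← Finset.mul_sum, ← Finset.mul_sum, schouten t ht 0, schouten t ht 1]
  ring

/-- The full `m × n` matrix of a collection. -/
noncomputable def fullM (S : List (Triplet n)) : Matrix (Fin S.length) (Fin n) (Poly n) :=
  Matrix.of fun r c => rowEntry (S.get r) c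

lemma sq_perm_det {m : ℕ} (W : Matrix (Fin m) (Fin m) (Poly n)) (σ : Equiv.Perm (Fin m)) :
    (Matrix.det (W.submatrix id σ)) ^ 2 = (Matrix.det W) ^ 2 := by
  rw [Matrix.det_permute']
  rcases Int.units_eq_one_or (Equiv.Perm.sign σ) with h | h <;> rw [h] <;> push_cast <;> ring

lemma image_eq_of_subset_card {α β : Type*} [DecidableEq β] [Fintype α] {f : α → β}
    (hf : Function.Injective f) (t : Finset β) (hsub : ∀ a, f a ∈ t)
    (hcard : t.card = Fintype.card α) :
    Finset.image f Finset.univ = t := by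
  apply Finset.eq_of_subset_of_card_le
  · intro x hx
    obtain ⟨a, _, rfl⟩ := Finset.mem_image.mp hx
    exact hsub a
  · rw [Finset.card_image_of_injective _ hf, Finset.card_univ, hcard]

lemma sq_det_eq_of_image_eq {m : ℕ} {ι : Type*} [DecidableEq ι]
    (W : Matrix (Fin m) ι (Poly n)) (f g : Fin m → ι)
    (hf : Function.Injective f) (hg : Function.Injective g)
    (h : Finset.image f Finset.univ = Finset.image g Finset.univ) :
    (Matrix.det (W.submatrix id f)) ^ 2 = (Matrix.det (W.submatrix id g)) ^ 2 := by
  have hex : ∀ r, ∃ s, g s = f r := by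
    intro r
    have : f r ∈ Finset.image g Finset.univ := by
      rw [← h]; exact Finset.mem_image_of_mem f (Finset.mem_univ r)
    simpa using this
  choose σ hσ using hex
  have hinj : Function.Injective σ := by
    intro x y hxy
    apply hf; rw [← hσ, ← hσ, hxy]
  have hbij : Function.Bijective σ := Finite.injective_iff_bijective.mp hinj
  have : W.submatrix id f = (W.submatrix id g).submatrix id (Equiv.ofBijective σ hbij) := by
    ext r c
    simp [Matrix.submatrix_apply, hσ, Equiv.ofBijective]
  rw [this, sq_perm_det]

/-- enumeration of a finset by sorted order -/
noncomputable def sEnum (cols : Finset (Fin n)) (m : ℕ) (h : cols.card = m) : Fin m → Fin n :=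
  fun r => (cols.sort (· ≤ ·)).get
    (Fin.cast (show m = (cols.sort (· ≤ ·)).length by rw [Finset.length_sort, h]) r)

lemma sEnum_inj (cols : Finset (Fin n)) (m : ℕ) (h : cols.card = m) :
    Function.Injective (sEnum cols m h) := by
  intro a b hab
  have := (List.nodup_iff_injective_get.mp (cols.sort_nodup (· ≤ ·))) hab
  exact Fin.cast_injective _ this

lemma sEnum_mem (cols : Finset (Fin n)) (m : ℕ) (h : cols.card = m) (r : Fin m) :
    sEnum cols m h r ∈ cols := by
  have : sEnum cols m h r ∈ cols.sort (· ≤ ·) := List.get_mem _ _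
  exact (Finset.mem_sort (· ≤ ·)).mp this

lemma sEnum_image (cols : Finset (Fin n)) (m : ℕ) (h : cols.card = m) :
    Finset.image (sEnum cols m h) Finset.univ = cols :=
  image_eq_of_subset_card (sEnum_inj cols m h) cols (sEnum_mem cols m h)
    (by rw [h, Fintype.card_fin])

lemma detCols_eq_det (S : List (Triplet n)) (cols : Finset (Fin n))
    (hcard : cols.card = S.length) :
    detCols S cols = Matrix.det ((fullM S).submatrix id (sEnum cols S.length hcard)) := by
  unfold detCols
  congr 1
  ext r c
  have hc : (c : ℕ) < (cols.sort (· ≤ ·)).length := by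
    rw [Finset.length_sort, hcard]; exact c.2
  rw [Matrix.of_apply, List.getElem?_eq_getElem hc]
  rfl

lemma detCols_sq (S : List (Triplet n)) (cols : Finset (Fin n))
    (hcard : cols.card = S.length) {m : ℕ} (he : S.length = m)
    (f : Fin m → Fin n) (hf : Function.Injective f)
    (himg : Finset.image f Finset.univ = cols) :
    (detCols S cols) ^ 2 = (Matrix.det ((fullM S).submatrix (Fin.cast he.symm) f)) ^ 2 := by
  subst he
  rw [detCols_eq_det S cols hcard]
  have : (fullM S).submatrix (Fin.cast rfl) f = (fullM S).submatrix id f := rfl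
  rw [this]
  exact sq_det_eq_of_image_eq _ _ _ (sEnum_inj _ _ _) hf
    ((sEnum_image cols S.length hcard).trans himg.symm)


lemma image_succAbove (m : ℕ) (q : Fin (m + 1)) :
    Finset.image q.succAbove Finset.univ = Finset.univ.erase q := by
  apply image_eq_of_subset_card (Fin.succAbove_right_injective)
  · intro a
    exact Finset.mem_erase.mpr ⟨Fin.succAbove_ne q a, Finset.mem_univ _⟩
  · rw [Finset.card_erase_of_mem (Finset.mem_univ q), Finset.card_univ,
      Fintype.card_fin, Fintype.card_fin]
    omega

lemma syzygy {m : ℕ} (B : Matrix (Fin m) (Fin (m + 1)) (Poly n)) (y : Fin (m + 1) → Poly n)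
    (hy : B.mulVec y = 0) (p q : Fin (m + 1)) :
    (Matrix.det (B.submatrix id p.succAbove) * y q) ^ 2
      = (Matrix.det (B.submatrix id q.succAbove) * y p) ^ 2 := by
  rcases eq_or_ne q p with rfl | hqp
  · rfl
  obtain ⟨j, hj⟩ := Fin.exists_succAbove_eq hqp
  set A := B.submatrix id p.succAbove with hA
  set colp : Fin m → Poly n := fun r => B r p with hcolp
  have h1 : A.mulVec (y ∘ p.succAbove) = (-(y p)) • colp := by
    funext r
    have h0 : ∑ c, B r c * y c = 0 := congrFun hy r
    have h2 := Fin.sum_univ_succAbove (fun c => B r c * y c) p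
    rw [h0] at h2
    simp only [Matrix.mulVec, dotProduct, hA, Matrix.submatrix_apply, id_eq,
      Function.comp_apply, Pi.smul_apply, smul_eq_mul, hcolp]
    linear_combination -h2
  have h2 : Matrix.det A • (y ∘ p.succAbove) = (-(y p)) • Matrix.cramer A colp := by
    rw [Matrix.cramer_eq_adjugate_mulVec, ← Matrix.mulVec_smul, ← h1,
      Matrix.mulVec_mulVec, Matrix.adjugate_mul, Matrix.smul_mulVec,
      Matrix.one_mulVec]
  have h3 := congrFun h2 j
  simp only [Pi.smul_apply, Function.comp_apply, smul_eq_mul, hj, Matrix.cramer_apply] at h3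
  have h4 : (Matrix.det (A.updateCol j colp)) ^ 2
      = (Matrix.det (B.submatrix id q.succAbove)) ^ 2 := by
    have hup : A.updateCol j colp = B.submatrix id (Function.update p.succAbove j p) := by
      ext r c
      by_cases hc : c = j
      · subst hc; simp [Matrix.updateCol_apply, Function.update, hcolp]
      · simp [Matrix.updateCol_apply, Function.update, hc, hA]
    rw [hup]
    have hfinj : Function.Injective (Function.update p.succAbove j p) := by
      intro a b hab
      by_cases ha : a = j <;> by_cases hb : b = j
      · rw [ha, hb]
      · rw [ha, Function.update_self, Function.update_of_ne hb] at hab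
        exact absurd hab.symm (Fin.succAbove_ne p b)
      · rw [hb, Function.update_self, Function.update_of_ne ha] at hab
        exact absurd hab (Fin.succAbove_ne p a)
      · rw [Function.update_of_ne ha, Function.update_of_ne hb] at hab
        exact Fin.succAbove_right_injective hab
    apply sq_det_eq_of_image_eq _ _ _ hfinj Fin.succAbove_right_injective
    rw [image_succAbove]
    apply image_eq_of_subset_card hfinj
    · intro a
      refine Finset.mem_erase.mpr ⟨?_, Finset.mem_univ _⟩
      rcases eq_or_ne a j with rfl | ha
      · rw [Function.update_self]; exact fun h => hqp h.symm
      · rw [Function.update_of_ne ha]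
        intro h
        exact ha (Fin.succAbove_right_injective (h.trans hj.symm))
    · rw [Finset.card_erase_of_mem (Finset.mem_univ q), Finset.card_univ,
        Fintype.card_fin, Fintype.card_fin]
      omega
  calc (Matrix.det A * y q) ^ 2 = (-(y p) * Matrix.det (A.updateCol j colp)) ^ 2 := by
        rw [h3]
    _ = (Matrix.det (B.submatrix id q.succAbove) * y p) ^ 2 := by
        rw [mul_pow, mul_pow, h4]; ring

lemma exchange_share (S : List (Triplet n)) (I : Finset (Fin n))
    (hcard : I.card = S.length + 2)
    (hdist : ∀ t ∈ S, t.Distinct) (hsub : ∀ t ∈ S, t.indices ⊆ I)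
    {a b c : Fin n} (ha : a ∈ I) (hb : b ∈ I.erase a) (hc : c ∈ I.erase a) :
    (detCols S ((I.erase a).erase b)) ^ 2 * (bra a c) ^ 2
      = (detCols S ((I.erase a).erase c)) ^ 2 * (bra a b) ^ 2 := by
  have hcard' : (I.erase a).card = S.length + 1 := by
    rw [Finset.card_erase_of_mem ha, hcard]
    omega
  set e : Fin (S.length + 1) → Fin n := sEnum (I.erase a) (S.length + 1) hcard' with he
  have heinj : Function.Injective e := sEnum_inj _ _ _
  have heimg : Finset.image e Finset.univ = I.erase a := sEnum_image _ _ _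
  obtain ⟨p, -, hp⟩ := Finset.mem_image.mp (heimg ▸ hb)
  obtain ⟨q, -, hq⟩ := Finset.mem_image.mp (heimg ▸ hc)
  set B : Matrix (Fin S.length) (Fin (S.length + 1)) (Poly n) :=
    (fullM S).submatrix id e with hB
  have hy : B.mulVec (fun s => bra a (e s)) = 0 := by
    funext r
    simp only [Matrix.mulVec, dotProduct, hB, Matrix.submatrix_apply, id_eq,
      Pi.zero_apply, fullM, Matrix.of_apply]
    rw [← Finset.sum_image (f := fun x => rowEntry (S.get r) x * bra a x)
      (g := e) (fun x _ y _ h => heinj h)]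
    rw [heimg]
    rw [Finset.sum_subset (Finset.subset_univ _)]
    · exact rowEntry_mul_bra_sum (S.get r) (hdist _ (S.get_mem _)) a
    · intro x _ hx
      rcases eq_or_ne x a with rfl | hxa
      · rw [bra_self, mul_zero]
      · have hxI : x ∉ I := fun hxI => hx (Finset.mem_erase.mpr ⟨hxa, hxI⟩)
        rw [rowEntry_eq_zero (fun hmem => hxI (hsub _ (S.get_mem _) hmem)), zero_mul]
  have hsyz := syzygy B (fun s => bra a (e s)) hy p q
  simp only [hp, hq] at hsyz
  have key : ∀ (x : Fin n) (u : Fin (S.length + 1)), e u = x → x ∈ I.erase a →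
      (Matrix.det (B.submatrix id u.succAbove)) ^ 2
        = (detCols S ((I.erase a).erase x)) ^ 2 := by
    intro x u hu hx
    have hcomp : B.submatrix id u.succAbove = (fullM S).submatrix id (e ∘ u.succAbove) := by
      ext r c; simp [hB]
    rw [hcomp]
    have hcard'' : ((I.erase a).erase x).card = S.length := by
      rw [Finset.card_erase_of_mem hx, hcard']
      omega
    have himg2 : Finset.image (e ∘ u.succAbove) Finset.univ = (I.erase a).erase x := by
      rw [← Finset.image_image, image_succAbove, Finset.image_erase heinj, heimg, hu]
    rw [detCols_sq S _ hcard'' rfl (e ∘ u.succAbove)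
      (heinj.comp Fin.succAbove_right_injective) himg2]
    rfl
  rw [← key b p hp hb, ← key c q hq hc]
  rw [← mul_pow, ← mul_pow, hsyz]

lemma exchange (S : List (Triplet n)) (I : Finset (Fin n))
    (hcard : I.card = S.length + 2)
    (hdist : ∀ t ∈ S, t.Distinct) (hsub : ∀ t ∈ S, t.indices ⊆ I)
    {a b c d : Fin n} (ha : a ∈ I) (hb : b ∈ I) (hc : c ∈ I) (hd : d ∈ I)
    (hab : a ≠ b) (hcd : c ≠ d) :
    (detCols S ((I.erase a).erase b)) ^ 2 * (bra c d) ^ 2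
      = (detCols S ((I.erase c).erase d)) ^ 2 * (bra a b) ^ 2 := by
  have mem_erase_of : ∀ {x y : Fin n}, x ∈ I → x ≠ y → x ∈ I.erase y :=
    fun hx hxy => Finset.mem_erase.mpr ⟨hxy, hx⟩
  by_cases hdb : d = b
  · rw [hdb]
    rw [hdb] at hcd
    by_cases hca : c = a
    · rw [hca]
    · have this := exchange_share S I hcard hdist hsub hb
        (mem_erase_of ha hab) (mem_erase_of hc hcd)
      -- this : D((I∖b)∖a)² * bra b c² = D((I∖b)∖c)² * bra b a²
      rw [show (I.erase a).erase b = (I.erase b).erase a from Finset.erase_right_comm,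
        show (I.erase c).erase b = (I.erase b).erase c from Finset.erase_right_comm,
        bra_sq_symm c b, bra_sq_symm a b]
      exact this
  · by_cases hda : d = a
    · rw [hda]
      rw [hda] at hcd
      have this := exchange_share S I hcard hdist hsub ha
        (mem_erase_of hb (Ne.symm hab)) (mem_erase_of hc hcd)
      -- this : D((I∖a)∖b)² * bra a c² = D((I∖a)∖c)² * bra a b²
      rw [bra_sq_symm c a,
        show (I.erase c).erase a = (I.erase a).erase c from Finset.erase_right_comm]
      exact this
    · have step1 := exchange_share S I hcard hdist hsub hb
        (mem_erase_of ha hab) (mem_erase_of hd hdb)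
      -- step1 : D((I∖b)∖a)² * bra b d² = D((I∖b)∖d)² * bra b a²
      have step2 := exchange_share S I hcard hdist hsub hd
        (mem_erase_of hb (fun h => hdb h.symm)) (mem_erase_of hc hcd)
      -- step2 : D((I∖d)∖b)² * bra d c² = D((I∖d)∖c)² * bra d b²
      rw [show (I.erase b).erase a = (I.erase a).erase b from Finset.erase_right_comm] at step1
      rw [show (I.erase d).erase b = (I.erase b).erase d from Finset.erase_right_comm,
        show (I.erase d).erase c = (I.erase c).erase d from Finset.erase_right_comm] at step2
      have hbd2 : (bra b d) ^ 2 ≠ 0 := pow_ne_zero 2 (bra_ne_zero (fun h => hdb h.symm))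
      apply mul_right_cancel₀ hbd2
      calc (detCols S ((I.erase a).erase b)) ^ 2 * (bra c d) ^ 2 * (bra b d) ^ 2
          = ((detCols S ((I.erase a).erase b)) ^ 2 * (bra b d) ^ 2) * (bra c d) ^ 2 := by ring
        _ = ((detCols S ((I.erase b).erase d)) ^ 2 * (bra b a) ^ 2) * (bra c d) ^ 2 := by
            rw [step1]
        _ = ((detCols S ((I.erase b).erase d)) ^ 2 * (bra d c) ^ 2) * (bra b a) ^ 2 := by
            rw [bra_sq_symm d c, bra_sq_symm c d]; ring
        _ = ((detCols S ((I.erase c).erase d)) ^ 2 * (bra d b) ^ 2) * (bra b a) ^ 2 := by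
            rw [step2]
        _ = (detCols S ((I.erase c).erase d)) ^ 2 * (bra a b) ^ 2 * (bra b d) ^ 2 := by
            rw [bra_sq_symm d b, bra_sq_symm a b]; ring


lemma sq_det_of_row_single {m : ℕ} (W : Matrix (Fin (m + 1)) (Fin (m + 1)) (Poly n))
    (r₀ c₀ : Fin (m + 1)) (h : ∀ c, c ≠ c₀ → W r₀ c = 0) :
    (W.det) ^ 2 = (W r₀ c₀) ^ 2 * ((W.submatrix r₀.succAbove c₀.succAbove).det) ^ 2 := by
  rw [Matrix.det_succ_row W r₀]
  rw [Finset.sum_eq_single c₀ (fun b _ hb => by rw [h b hb]; ring) (by simp)]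
  have h1 : ((-1 : Poly n) ^ ((r₀ : ℕ) + (c₀ : ℕ))) ^ 2 = 1 := by
    rw [← pow_mul, mul_comm ((r₀ : ℕ) + (c₀ : ℕ)) 2, pow_mul]
    norm_num
  rw [mul_pow, mul_pow, h1, one_mul]

lemma det_lone_sq (A B : List (Triplet n)) (i j k : Fin n)
    (hijk : Triplet.Distinct (n := n) (i, j, k))
    (hlen : A.length + B.length + 3 = n) :
    (detCols (A ++ (i, j, k) :: B) ((Finset.univ.erase i).erase j)) ^ 2
      = (bra i j) ^ 2
        * (detCols (A ++ B) (((Finset.univ.erase i).erase j).erase k)) ^ 2 := by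
  obtain ⟨hij, hik, hjk⟩ := hijk
  simp only [ne_eq] at hij hik hjk
  set m : ℕ := (A ++ B).length with hmdef
  have hm : m = A.length + B.length := by rw [hmdef, List.length_append]
  have hT : (A ++ (i, j, k) :: B).length = m + 1 := by
    rw [List.length_append, List.length_cons]; omega
  have hjmem : j ∈ Finset.univ.erase i :=
    Finset.mem_erase.mpr ⟨fun h => hij h.symm, Finset.mem_univ _⟩
  have hkmem : k ∈ (Finset.univ.erase i).erase j := by
    refine Finset.mem_erase.mpr ⟨fun h => hjk h.symm, ?_⟩
    exact Finset.mem_erase.mpr ⟨fun h => hik h.symm, Finset.mem_univ _⟩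
  set C : Finset (Fin n) := ((Finset.univ.erase i).erase j).erase k with hCdef
  have hcardIJ : ((Finset.univ.erase i).erase j).card = m + 1 := by
    rw [Finset.card_erase_of_mem hjmem, Finset.card_erase_of_mem (Finset.mem_univ i),
      Finset.card_univ, Fintype.card_fin]
    omega
  have hcardC : C.card = m := by
    rw [hCdef, Finset.card_erase_of_mem hkmem, hcardIJ]
    omega
  set g' : Fin m → Fin n := sEnum C m hcardC with hg'def
  have hg'mem : ∀ r, g' r ∈ C := sEnum_mem C m hcardC
  have hg'inj : Function.Injective g' := sEnum_inj C m hcardC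
  have hg'ne : ∀ r, g' r ≠ k ∧ g' r ≠ j ∧ g' r ≠ i := by
    intro r
    have h1 := hg'mem r
    rw [hCdef] at h1
    obtain ⟨h2, h3⟩ := Finset.mem_erase.mp h1
    obtain ⟨h4, h5⟩ := Finset.mem_erase.mp h3
    exact ⟨h2, h4, (Finset.mem_erase.mp h5).1⟩
  set f : Fin (m + 1) → Fin n := Fin.snoc g' k with hfdef
  have hflast : f (Fin.last m) = k := by rw [hfdef]; exact Fin.snoc_last _ _
  have hfcast : ∀ c : Fin m, f c.castSucc = g' c := by
    intro c; rw [hfdef]; exact Fin.snoc_castSucc _ _ _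
  have hfinj : Function.Injective f := by
    intro x y hxy
    by_cases hx : x = Fin.last m <;> by_cases hy : y = Fin.last m
    · rw [hx, hy]
    · obtain ⟨y', rfl⟩ := Fin.eq_castSucc_of_ne_last hy
      rw [hx, hflast, hfcast] at hxy
      exact absurd hxy.symm (hg'ne y').1
    · obtain ⟨x', rfl⟩ := Fin.eq_castSucc_of_ne_last hx
      rw [hy, hflast, hfcast] at hxy
      exact absurd hxy (hg'ne x').1
    · obtain ⟨x', rfl⟩ := Fin.eq_castSucc_of_ne_last hx
      obtain ⟨y', rfl⟩ := Fin.eq_castSucc_of_ne_last hy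
      rw [hfcast, hfcast] at hxy
      rw [hg'inj hxy]
  have himg : Finset.image f Finset.univ = (Finset.univ.erase i).erase j := by
    apply image_eq_of_subset_card hfinj
    · intro a
      by_cases haa : a = Fin.last m
      · rw [haa, hflast]; exact hkmem
      · obtain ⟨a', rfl⟩ := Fin.eq_castSucc_of_ne_last haa
        rw [hfcast]
        exact Finset.erase_subset _ _ (hg'mem a')
    · rw [hcardIJ, Fintype.card_fin]
  have hcard2 : ((Finset.univ.erase i).erase j).card = (A ++ (i, j, k) :: B).length := by
    rw [hcardIJ, hT]
  rw [detCols_sq (A ++ (i, j, k) :: B) _ hcard2 hT f hfinj himg]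
  set W : Matrix (Fin (m + 1)) (Fin (m + 1)) (Poly n) :=
    (fullM (A ++ (i, j, k) :: B)).submatrix (Fin.cast hT.symm) f with hWdef
  have hr0lt : A.length < m + 1 := by omega
  set r₀ : Fin (m + 1) := ⟨A.length, hr0lt⟩ with hr0def
  have hgetmid : (A ++ (i, j, k) :: B).get (Fin.cast hT.symm r₀) = (i, j, k) := by
    rw [List.get_eq_getElem]
    show (A ++ (i, j, k) :: B)[(A.length : ℕ)] = (i, j, k)
    rw [List.getElem_append_right (le_refl A.length)]
    simp
  have hrow : ∀ r : Fin m,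
      (A ++ (i, j, k) :: B).get (Fin.cast hT.symm (r₀.succAbove r)) = (A ++ B).get r := by
    intro r
    rw [List.get_eq_getElem, List.get_eq_getElem]
    rcases lt_or_ge (r : ℕ) A.length with h | h
    · have hsa : r₀.succAbove r = r.castSucc := by
        apply Fin.succAbove_of_castSucc_lt
        rw [Fin.lt_def]; exact h
      rw [hsa]
      show (A ++ (i, j, k) :: B)[(r : ℕ)] = (A ++ B)[(r : ℕ)]
      rw [List.getElem_append_left h, List.getElem_append_left h]
    · have hsa : r₀.succAbove r = r.succ := by
        apply Fin.succAbove_of_le_castSucc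
        rw [Fin.le_def]; exact h
      rw [hsa]
      show (A ++ (i, j, k) :: B)[(r : ℕ) + 1] = (A ++ B)[(r : ℕ)]
      have h1 : A.length ≤ (r : ℕ) + 1 := by omega
      rw [List.getElem_append_right h1, List.getElem_append_right h]
      have h2 : (r : ℕ) + 1 - A.length = ((r : ℕ) - A.length) + 1 := by omega
      simp only [h2, List.getElem_cons_succ]
  have hzero : ∀ c, c ≠ Fin.last m → W r₀ c = 0 := by
    intro c hc
    obtain ⟨c', rfl⟩ := Fin.eq_castSucc_of_ne_last hc
    show rowEntry ((A ++ (i, j, k) :: B).get (Fin.cast hT.symm r₀)) (f c'.castSucc) = 0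
    rw [hgetmid, hfcast]
    apply rowEntry_eq_zero
    obtain ⟨h1, h2, h3⟩ := hg'ne c'
    simp [Triplet.indices, h1, h2, h3]
  have hWlast : W r₀ (Fin.last m) = bra i j := by
    show rowEntry ((A ++ (i, j, k) :: B).get (Fin.cast hT.symm r₀)) (f (Fin.last m)) = bra i j
    rw [hgetmid, hflast]
    simp [rowEntry, show ¬ k = i from fun h => hik h.symm,
      show ¬ k = j from fun h => hjk h.symm]
  rw [sq_det_of_row_single W r₀ (Fin.last m) hzero, hWlast]
  congr 1
  have hminor : W.submatrix r₀.succAbove (Fin.last m).succAbove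
      = (fullM (A ++ B)).submatrix (Fin.cast rfl) g' := by
    refine Matrix.ext fun r c => ?_
    show rowEntry ((A ++ (i, j, k) :: B).get (Fin.cast hT.symm (r₀.succAbove r)))
        (f ((Fin.last m).succAbove c))
      = rowEntry ((A ++ B).get (Fin.cast rfl r)) (g' c)
    rw [hrow r, Fin.succAbove_last, hfcast]
    rfl
  rw [hminor, ← detCols_sq (A ++ B) C hcardC rfl g' hg'inj (sEnum_image C m hcardC)]

lemma fForm_eq (S : List (Triplet n)) (I : Finset (Fin n)) (h : 2 ≤ I.card)
    (h1 : I.Nonempty) (h2 : (I.erase (I.min' h1)).Nonempty) :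
    fForm S I = toFF (Mdet S I (I.min' h1) ((I.erase (I.min' h1)).min' h2)) ^ 2 /
      (toFF (bra (I.min' h1) ((I.erase (I.min' h1)).min' h2)) ^ 2 * toFF (denom S)) := by
  unfold fForm
  rw [dif_pos h]

lemma denom_append (L1 L2 : List (Triplet n)) :
    denom (L1 ++ L2) = denom L1 * denom L2 := by
  unfold denom
  rw [List.map_append, List.prod_append]

lemma denom_cons (t : Triplet n) (L : List (Triplet n)) :
    denom (t :: L) = (bra t.1 t.2.1 * bra t.2.1 t.2.2 * bra t.2.2 t.1) * denom L := by
  unfold denom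
  rw [List.map_cons, List.prod_cons]

lemma denom_ne_zero (L : List (Triplet n)) (h : ∀ t ∈ L, t.Distinct) : denom L ≠ 0 := by
  induction L with
  | nil => simp [denom]
  | cons t L ih =>
    rw [denom_cons]
    obtain ⟨h1, h2, h3⟩ := h t (List.mem_cons_self)
    exact mul_ne_zero
      (mul_ne_zero (mul_ne_zero (bra_ne_zero h1) (bra_ne_zero h3)) (bra_ne_zero (Ne.symm h2)))
      (ih fun u hu => h u (List.mem_cons_of_mem _ hu))

lemma toFF_ne_zero {x : Poly n} (h : x ≠ 0) : toFF x ≠ 0 :=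
  (map_ne_zero_iff toFF (IsFractionRing.injective (Poly n) (FF n))).mpr h

/-- the index renaming `j ↦ i` -/
def renF (i j : Fin n) : Fin n → Fin n := fun x => if x = j then i else x

def renT (i j : Fin n) : Triplet n → Triplet n := fun t =>
  (if t.1 = j then i else t.1, if t.2.1 = j then i else t.2.1, if t.2.2 = j then i else t.2.2)

def renV (i j : Fin n) : Fin 2 × Fin n → Fin 2 × Fin n :=
  fun v => (v.1, if v.2 = j then i else v.2)

lemma phi_bra (i j a b : Fin n) :
    rename (renV i j) (bra a b) = bra (if a = j then i else a) (if b = j then i else b) := by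
  simp [bra, renV, rename_X]

lemma phi_rowEntry {i j : Fin n} (t : Triplet n) {c : Fin n} (hci : c ≠ i) (hcj : c ≠ j) :
    rename (renV i j) (rowEntry t c) = rowEntry (renT i j t) c := by
  have key : ∀ x : Fin n, (c = (if x = j then i else x)) = (c = x) := by
    intro x
    by_cases hx : x = j
    · simp [hx, hci, hcj]
    · simp [hx]
  simp only [rowEntry, renT, apply_ite (rename (renV i j)), map_zero, phi_bra, key]

lemma phi_denom (i j : Fin n) (L : List (Triplet n)) :
    rename (renV i j) (denom L) = denom (L.map (renT i j)) := by
  unfold denom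
  rw [map_list_prod, List.map_map, List.map_map]
  congr 1
  refine List.map_congr_left fun t ht => ?_
  simp [Function.comp, phi_bra, renT]

lemma phi_detCols {i j : Fin n} (L : List (Triplet n)) (C : Finset (Fin n))
    (hcard : C.card = L.length) (hC : ∀ c ∈ C, c ≠ i ∧ c ≠ j) :
    rename (renV i j) (detCols L C) = detCols (L.map (renT i j)) C := by
  have hcard' : C.card = (L.map (renT i j)).length := by rw [List.length_map]; exact hcard
  have hE : L.length = (L.map (renT i j)).length := (List.length_map _).symm
  rw [detCols_eq_det L C hcard, detCols_eq_det _ C hcard']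
  rw [AlgHom.map_det (rename (renV i j))]
  rw [← Matrix.det_submatrix_equiv_self (finCongr hE)
    (((fullM (L.map (renT i j)))).submatrix id (sEnum C _ hcard'))]
  congr 1
  refine Matrix.ext fun r c => ?_
  show rename (renV i j) (rowEntry (L.get r) (sEnum C L.length hcard c))
    = rowEntry ((L.map (renT i j)).get (finCongr hE r)) (sEnum C _ hcard' (finCongr hE c))
  have h1 : (L.map (renT i j)).get (finCongr hE r) = renT i j (L.get r) := by
    rw [List.get_eq_getElem, List.get_eq_getElem]
    exact List.getElem_map _
  have h2 : sEnum C _ hcard' (finCongr hE c) = sEnum C L.length hcard c := rfl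
  rw [h1, h2]
  obtain ⟨hci, hcj⟩ := hC _ (sEnum_mem C L.length hcard c)
  exact phi_rowEntry _ hci hcj

lemma ren_ne {i j : Fin n} {t : Triplet n}
    (hlone : ¬(i ∈ t.indices ∧ j ∈ t.indices))
    {a b : Fin n} (ha : a ∈ t.indices) (hb : b ∈ t.indices) (hab : a ≠ b) :
    (if a = j then i else a) ≠ (if b = j then i else b) := by
  by_cases haj : a = j <;> by_cases hbj : b = j
  · exact absurd (haj.trans hbj.symm) hab
  · rw [if_pos haj, if_neg hbj]
    intro h
    exact hlone ⟨h ▸ hb, haj ▸ ha⟩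
  · rw [if_neg haj, if_pos hbj]
    intro h
    exact hlone ⟨h ▸ ha, hbj ▸ hb⟩
  · rw [if_neg haj, if_neg hbj]; exact hab

lemma mem_indices_1 (t : Triplet n) : t.1 ∈ t.indices := by
  simp [Triplet.indices]

lemma mem_indices_21 (t : Triplet n) : t.2.1 ∈ t.indices := by
  simp [Triplet.indices]

lemma mem_indices_22 (t : Triplet n) : t.2.2 ∈ t.indices := by
  simp [Triplet.indices]

lemma renT_distinct {i j : Fin n} (t : Triplet n) (ht : t.Distinct)
    (hlone : ¬(i ∈ t.indices ∧ j ∈ t.indices)) : (renT i j t).Distinct := by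
  obtain ⟨h1, h2, h3⟩ := ht
  exact ⟨ren_ne hlone (mem_indices_1 t) (mem_indices_21 t) h1,
    ren_ne hlone (mem_indices_1 t) (mem_indices_22 t) h2,
    ren_ne hlone (mem_indices_21 t) (mem_indices_22 t) h3⟩

lemma renT_indices_sub {i j : Fin n} (hij : i ≠ j) (t : Triplet n) :
    (renT i j t).indices ⊆ Finset.univ.erase j := by
  intro x hx
  refine Finset.mem_erase.mpr ⟨?_, Finset.mem_univ _⟩
  have key : ∀ a : Fin n, (if a = j then i else a) ≠ j := by
    intro a
    by_cases ha : a = j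
    · simp [ha, hij]
    · simp [ha]
  simp only [renT, Triplet.indices, Finset.mem_insert, Finset.mem_singleton] at hx
  rcases hx with rfl | rfl | rfl <;> exact key _

lemma part_a (hn : 4 ≤ n) (i j k : Fin n) (A B : List (Triplet n))
    (hdist : ∀ t ∈ A ++ (i, j, k) :: B, Triplet.Distinct t)
    (hij : i ≠ j) (hik : i ≠ k) (hjk : j ≠ k)
    (hlen3 : A.length + B.length + 3 = n)
    (a₀ b₀ : Fin n) (hb₀mem : b₀ ∈ Finset.univ.erase a₀) :
    toFF (bra i j) * (toFF (Mdet (A ++ (i, j, k) :: B) Finset.univ a₀ b₀) ^ 2 /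
        (toFF (bra a₀ b₀) ^ 2 * toFF (denom (A ++ (i, j, k) :: B))))
      = toFF (detCols (A ++ B) (((Finset.univ.erase i).erase j).erase k) ^ 2)
        / toFF (bra j k * bra k i * denom (A ++ B)) := by
  have hdistL : ∀ t ∈ A ++ B, Triplet.Distinct t := by
    intro t ht
    rcases List.mem_append.mp ht with h | h
    · exact hdist t (List.mem_append.mpr (Or.inl h))
    · exact hdist t (List.mem_append.mpr (Or.inr (List.mem_cons_of_mem _ h)))
  have hcardU : (Finset.univ : Finset (Fin n)).card = (A ++ (i, j, k) :: B).length + 2 := by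
    rw [Finset.card_univ, Fintype.card_fin, List.length_append, List.length_cons]
    omega
  have hsubU : ∀ t ∈ A ++ (i, j, k) :: B, Triplet.indices t ⊆ Finset.univ :=
    fun t _ => Finset.subset_univ _
  have hab₀ : a₀ ≠ b₀ := fun h => (Finset.mem_erase.mp hb₀mem).1 h.symm
  have E1 := exchange (A ++ (i, j, k) :: B) Finset.univ hcardU hdist hsubU
    (Finset.mem_univ a₀) (Finset.mem_univ b₀) (Finset.mem_univ i) (Finset.mem_univ j) hab₀ hij
  have E2 := det_lone_sq A B i j k ⟨hij, hik, hjk⟩ hlen3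
  have E3 : denom (A ++ (i, j, k) :: B) = bra i j * bra j k * bra k i * denom (A ++ B) := by
    rw [denom_append, denom_cons]
    show denom A * (bra i j * bra j k * bra k i * denom B) = _
    rw [denom_append]
    ring
  have zij := toFF_ne_zero (bra_ne_zero hij)
  have zjk := toFF_ne_zero (bra_ne_zero hjk)
  have zki := toFF_ne_zero (bra_ne_zero (Ne.symm hik))
  have zab := toFF_ne_zero (bra_ne_zero hab₀)
  have zdL := toFF_ne_zero (denom_ne_zero _ hdistL)
  have key : toFF (Mdet (A ++ (i, j, k) :: B) Finset.univ a₀ b₀) ^ 2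
      = toFF (detCols (A ++ B) (((Finset.univ.erase i).erase j).erase k)) ^ 2
        * toFF (bra a₀ b₀) ^ 2 := by
    have t1 := congrArg toFF E1
    have t2 := congrArg toFF E2
    simp only [map_mul, map_pow] at t1 t2
    apply mul_right_cancel₀ (pow_ne_zero 2 zij)
    rw [show Mdet (A ++ (i, j, k) :: B) Finset.univ a₀ b₀
      = detCols (A ++ (i, j, k) :: B) ((Finset.univ.erase a₀).erase b₀) from rfl]
    linear_combination t1 + toFF (bra a₀ b₀) ^ 2 * t2
  have tE3 := congrArg toFF E3
  simp only [map_mul] at tE3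
  simp only [map_mul, map_pow]
  rw [key, tE3]
  have hden1 : toFF (bra a₀ b₀) ^ 2
      * (toFF (bra i j) * toFF (bra j k) * toFF (bra k i) * toFF (denom (A ++ B))) ≠ 0 := by
    exact mul_ne_zero (pow_ne_zero 2 zab)
      (mul_ne_zero (mul_ne_zero (mul_ne_zero zij zjk) zki) zdL)
  have hden2 : toFF (bra j k) * toFF (bra k i) * toFF (denom (A ++ B)) ≠ 0 :=
    mul_ne_zero (mul_ne_zero zjk zki) zdL
  rw [← mul_div_assoc, div_eq_div_iff hden1 hden2]
  ring

lemma part_c (i j k : Fin n) (S : List (Triplet n))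
    (hij : i ≠ j) (hik : i ≠ k) (hjk : j ≠ k)
    (hcardI' : (Finset.univ.erase j).card = S.length + 2)
    (hdistS : ∀ t ∈ S, Triplet.Distinct t)
    (hsubS : ∀ t ∈ S, Triplet.indices t ⊆ Finset.univ.erase j)
    (a₁ b₁ : Fin n) (ha₁mem : a₁ ∈ Finset.univ.erase j)
    (hb₁mem : b₁ ∈ (Finset.univ.erase j).erase a₁) :
    toFF (detCols S (((Finset.univ.erase i).erase j).erase k) ^ 2)
      / toFF (bra i k * bra k i * denom S)
    = - (toFF (Mdet S (Finset.univ.erase j) a₁ b₁) ^ 2 /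
        (toFF (bra a₁ b₁) ^ 2 * toFF (denom S))) := by
  have hb₁mem' : b₁ ∈ Finset.univ.erase j := (Finset.mem_erase.mp hb₁mem).2
  have hab₁ : a₁ ≠ b₁ := fun h => (Finset.mem_erase.mp hb₁mem).1 h.symm
  have hiI' : i ∈ Finset.univ.erase j := Finset.mem_erase.mpr ⟨hij, Finset.mem_univ _⟩
  have hkI' : k ∈ Finset.univ.erase j := Finset.mem_erase.mpr ⟨Ne.symm hjk, Finset.mem_univ _⟩
  have E1' := exchange S (Finset.univ.erase j) hcardI' hdistS hsubS
    ha₁mem hb₁mem' hiI' hkI' hab₁ hik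
  have hCeq : ((Finset.univ.erase j).erase i).erase k
      = ((Finset.univ.erase i).erase j).erase k := by
    rw [show (Finset.univ.erase j).erase i = (Finset.univ.erase i).erase j from
      Finset.erase_right_comm]
  rw [hCeq] at E1'
  have zik := toFF_ne_zero (bra_ne_zero hik)
  have zab1 := toFF_ne_zero (bra_ne_zero hab₁)
  have zdS := toFF_ne_zero (denom_ne_zero _ hdistS)
  have t1 := congrArg toFF E1'
  simp only [map_mul, map_pow] at t1
  simp only [map_mul, map_pow]
  rw [show toFF (bra k i) = - toFF (bra i k) from by rw [bra_anti k i]; exact map_neg toFF _]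
  rw [show Mdet S (Finset.univ.erase j) a₁ b₁
    = detCols S (((Finset.univ.erase j).erase a₁).erase b₁) from rfl]
  have hden1 : toFF (bra i k) * -toFF (bra i k) * toFF (denom S) ≠ 0 :=
    mul_ne_zero (mul_ne_zero zik (neg_ne_zero.mpr zik)) zdS
  have hden2 : toFF (bra a₁ b₁) ^ 2 * toFF (denom S) ≠ 0 :=
    mul_ne_zero (pow_ne_zero 2 zab1) zdS
  rw [← neg_div, div_eq_div_iff hden1 hden2]
  linear_combination (- toFF (denom S)) * t1

end MHV

open MHV


/-- pole for a lone pair: suppose the indices `i`, `j` occur together in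
exactly one triplet `(i,j,k)` of the MHV collection `T`; let `T'` be obtained from
`T ∖ {(i,j,k)}` by replacing every occurrence of `j` by `i`, let `φ` be the ℚ-algebra
endomorphism sending `X_{m,j} ↦ X_{m,i}` and fixing all other indeterminates, let
`N = det(M_{ijk}(T))²` and `Q = ⟨jk⟩·⟨ki⟩·∏_{(a,b,c) ∈ T∖{(i,j,k)}} ⟨ab⟩⟨bc⟩⟨ca⟩`.
Then (a) `⟨ij⟩·f_T = N/Q`; (b) `φ(Q) ≠ 0`; (c) `φ(N)/φ(Q) = −f_{T'}`. -/
theorem statement6 {n : ℕ} (hn : 4 ≤ n)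
    (i j k : Fin n) (A B : List (MHV.Triplet n)) (T : List (MHV.Triplet n))
    (hTeq : T = A ++ (i, j, k) :: B)
    (hMHV : MHV.IsMHV n T)
    (hlone : ∀ t ∈ A ++ B,
      ¬(i ∈ MHV.Triplet.indices t ∧ j ∈ MHV.Triplet.indices t))
    (T' : List (MHV.Triplet n))
    (hT'eq : T' = (A ++ B).map fun t =>
      (if t.1 = j then i else t.1,
       if t.2.1 = j then i else t.2.1,
       if t.2.2 = j then i else t.2.2))
    (φ : MHV.Poly n →ₐ[ℚ] MHV.Poly n)
    (hφ : φ = MvPolynomial.rename fun v : Fin 2 × Fin n => (v.1, if v.2 = j then i else v.2))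
    (N Q : MHV.Poly n)
    (hN : N = MHV.detCols (A ++ B) (((Finset.univ.erase i).erase j).erase k) ^ 2)
    (hQ : Q = MHV.bra j k * MHV.bra k i * MHV.denom (A ++ B)) :
    MHV.toFF (MHV.bra i j) * MHV.fForm T Finset.univ = MHV.toFF N / MHV.toFF Q ∧
      φ Q ≠ 0 ∧
      MHV.toFF (φ N) / MHV.toFF (φ Q) = - MHV.fForm T' (Finset.univ.erase j) := by
  subst hTeq hT'eq hφ hN hQ
  obtain ⟨hlenT, hdist⟩ := hMHV
  have hijk : Triplet.Distinct (n := n) (i, j, k) :=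
    hdist _ (List.mem_append.mpr (Or.inr (List.mem_cons_self)))
  have hij : i ≠ j := hijk.1
  have hik : i ≠ k := hijk.2.1
  have hjk : j ≠ k := hijk.2.2
  have hlen3 : A.length + B.length + 3 = n := by
    rw [List.length_append, List.length_cons] at hlenT
    omega
  have hlenL : (A ++ B).length = A.length + B.length := List.length_append
  have hdistL : ∀ t ∈ A ++ B, Triplet.Distinct t := by
    intro t ht
    rcases List.mem_append.mp ht with h | h
    · exact hdist t (List.mem_append.mpr (Or.inl h))
    · exact hdist t (List.mem_append.mpr (Or.inr (List.mem_cons_of_mem _ h)))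
  have hrenT : (fun t : Triplet n =>
      (if t.1 = j then i else t.1,
       if t.2.1 = j then i else t.2.1,
       if t.2.2 = j then i else t.2.2)) = renT i j := rfl
  have hrenV : (fun v : Fin 2 × Fin n => (v.1, if v.2 = j then i else v.2)) = renV i j := rfl
  rw [hrenT, hrenV]
  have hjmem : j ∈ Finset.univ.erase i := Finset.mem_erase.mpr ⟨Ne.symm hij, Finset.mem_univ _⟩
  have hkmem : k ∈ (Finset.univ.erase i).erase j :=
    Finset.mem_erase.mpr ⟨Ne.symm hjk, Finset.mem_erase.mpr ⟨Ne.symm hik, Finset.mem_univ _⟩⟩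
  have hcardC : (((Finset.univ.erase i).erase j).erase k).card = (A ++ B).length := by
    rw [Finset.card_erase_of_mem hkmem, Finset.card_erase_of_mem hjmem,
      Finset.card_erase_of_mem (Finset.mem_univ i), Finset.card_univ, Fintype.card_fin, hlenL]
    omega
  have hCne : ∀ c ∈ ((Finset.univ.erase i).erase j).erase k, c ≠ i ∧ c ≠ j := by
    intro c hc
    obtain ⟨h1, h2⟩ := Finset.mem_erase.mp hc
    obtain ⟨h3, h4⟩ := Finset.mem_erase.mp h2
    exact ⟨(Finset.mem_erase.mp h4).1, h3⟩
  have h2n : 2 ≤ (Finset.univ : Finset (Fin n)).card := by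
    rw [Finset.card_univ, Fintype.card_fin]; omega
  have h1U : (Finset.univ : Finset (Fin n)).Nonempty := Finset.card_pos.mp (by omega)
  have h2U : ((Finset.univ : Finset (Fin n)).erase (Finset.univ.min' h1U)).Nonempty := by
    rw [← Finset.card_pos, Finset.card_erase_of_mem (Finset.min'_mem _ h1U)]; omega
  -- T' facts
  have hdistT' : ∀ t ∈ (A ++ B).map (renT i j), Triplet.Distinct t := by
    intro t' ht'
    obtain ⟨t, ht, rfl⟩ := List.mem_map.mp ht'
    exact renT_distinct t (hdistL t ht) (hlone t ht)
  have hsubT' : ∀ t ∈ (A ++ B).map (renT i j), Triplet.indices t ⊆ Finset.univ.erase j := by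
    intro t' ht'
    obtain ⟨t, ht, rfl⟩ := List.mem_map.mp ht'
    exact renT_indices_sub hij t
  have hdT' : denom ((A ++ B).map (renT i j)) ≠ 0 := denom_ne_zero _ hdistT'
  have phiQ : rename (renV i j) (bra j k * bra k i * denom (A ++ B))
      = bra i k * bra k i * denom ((A ++ B).map (renT i j)) := by
    rw [map_mul, map_mul, phi_bra, phi_bra, phi_denom]
    have e1 : (if j = j then i else j) = i := if_pos rfl
    have e2 : (if k = j then i else k) = k := if_neg (fun h => hjk h.symm)
    have e3 : (if i = j then i else i) = i := if_neg hij
    rw [e1, e2, e3]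
  have partb : rename (renV i j) (bra j k * bra k i * denom (A ++ B)) ≠ 0 := by
    rw [phiQ]
    exact mul_ne_zero (mul_ne_zero (bra_ne_zero hik) (bra_ne_zero (Ne.symm hik))) hdT'
  have phiN : rename (renV i j)
        (detCols (A ++ B) (((Finset.univ.erase i).erase j).erase k) ^ 2)
      = detCols ((A ++ B).map (renT i j)) (((Finset.univ.erase i).erase j).erase k) ^ 2 := by
    rw [map_pow, phi_detCols (A ++ B) _ hcardC hCne]
  have hcardI' : (Finset.univ.erase j).card = ((A ++ B).map (renT i j)).length + 2 := by
    rw [Finset.card_erase_of_mem (Finset.mem_univ j), Finset.card_univ, Fintype.card_fin,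
      List.length_map, hlenL]
    omega
  have h2n' : 2 ≤ (Finset.univ.erase j).card := by
    rw [Finset.card_erase_of_mem (Finset.mem_univ j), Finset.card_univ, Fintype.card_fin]
    omega
  have h1' : (Finset.univ.erase j).Nonempty := Finset.card_pos.mp (by omega)
  have h2' : ((Finset.univ.erase j).erase ((Finset.univ.erase j).min' h1')).Nonempty := by
    rw [← Finset.card_pos, Finset.card_erase_of_mem (Finset.min'_mem _ h1')]; omega
  refine ⟨?_, partb, ?_⟩
  · rw [fForm_eq _ _ h2n h1U h2U]
    exact part_a hn i j k A B hdist hij hik hjk hlen3 _ _ (Finset.min'_mem _ h2U)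
  · rw [phiN, phiQ, fForm_eq _ _ h2n' h1' h2']
    exact part_c i j k ((A ++ B).map (renT i j)) hij hik hjk hcardI' hdistT' hsubT'
      _ _ (Finset.min'_mem _ h1') (Finset.min'_mem _ h2')
end

section
/- (Reduction of a pair to its parity by square moves.) A square move on the pair {i,j} replaces two triplets of a collection whose underlying unordered sets are {i,j,a} and {i,j,b} (with a ≠ b and a, b ∉ {i,j}) by two triplets whose underlying sets are {i,a,b} and {j,a,b}. Let T be an MHV collection on {1,…,n} satisfying the non-vanishing condition and let i ≠ j. Then there is a finite sequence of square moves on the pair {i,j}, each applied to a collection satisfying the non-vanishing condition, transforming T into an MHV collection T* such that: if {i,j} ∈ D(T), then i and j occur together in exactly one triplet of T*, and if {i,j} ∉ D(T), then i and j occur together in no triplet of T*. -/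
open MvPolynomial

/-- A square move on the pair `{i,j}`: two triplets with underlying sets `{i,j,a}` and
`{i,j,b}` (with `a ≠ b` and `a,b ∉ {i,j}`) are replaced by two triplets with underlying
sets `{i,a,b}` and `{j,a,b}`. -/
def SqMove {n : ℕ} (i j : Fin n) (T T' : List (MHV.Triplet n)) : Prop :=
  ∃ (A B C : List (MHV.Triplet n)) (t₁ t₂ u₁ u₂ : MHV.Triplet n) (a b : Fin n),
    a ≠ b ∧ a ≠ i ∧ a ≠ j ∧ b ≠ i ∧ b ≠ j ∧
    MHV.Triplet.indices t₁ = {i, j, a} ∧ MHV.Triplet.indices t₂ = {i, j, b} ∧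
    MHV.Triplet.indices u₁ = {i, a, b} ∧ MHV.Triplet.indices u₂ = {j, a, b} ∧
    T = A ++ t₁ :: B ++ t₂ :: C ∧ T' = A ++ u₁ :: B ++ u₂ :: C

namespace MHV

variable {n : ℕ}

lemma indexSet_nil : indexSet ([] : List (Triplet n)) = ∅ := rfl

lemma indexSet_cons (t : Triplet n) (L : List (Triplet n)) :
    indexSet (t :: L) = t.indices ∪ indexSet L := rfl

lemma indexSet_append (L₁ L₂ : List (Triplet n)) :
    indexSet (L₁ ++ L₂) = indexSet L₁ ∪ indexSet L₂ := by
  induction L₁ with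
  | nil => simp [indexSet_nil]
  | cons t L ih => simp [indexSet_cons, ih, Finset.union_assoc]

lemma exists_third {T : List (Triplet n)} (hNV : NonVanishing T) {t : Triplet n}
    (ht : t ∈ T) {i j : Fin n} (hij : i ≠ j) (hi : i ∈ t.indices) (hj : j ∈ t.indices) :
    ∃ a, a ≠ i ∧ a ≠ j ∧ t.indices = {i, j, a} := by
  have h2 := hNV [t] (List.singleton_sublist.mpr ht) (by simp)
  rw [show indexSet [t] = t.indices by simp [indexSet_cons, indexSet_nil]] at h2
  simp only [List.length_singleton] at h2
  have hle : t.indices.card ≤ 3 := by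
    unfold Triplet.indices
    refine le_trans (Finset.card_insert_le _ _) ?_
    have h := Finset.card_insert_le t.2.1 ({t.2.2} : Finset (Fin n))
    simp at h ⊢
    omega
  have hsub : ({i, j} : Finset (Fin n)) ⊆ t.indices := by
    intro x hx
    simp only [Finset.mem_insert, Finset.mem_singleton] at hx
    rcases hx with rfl | rfl
    exacts [hi, hj]
  have hcard2 : ({i, j} : Finset (Fin n)).card = 2 := by
    rw [Finset.card_insert_of_notMem (by simp [hij]), Finset.card_singleton]
  have hdiff : (t.indices \ {i, j}).card = 1 := by
    rw [Finset.card_sdiff_of_subset hsub, hcard2]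
    omega
  obtain ⟨a, ha⟩ := Finset.card_eq_one.mp hdiff
  have haij : a ∈ t.indices \ ({i, j} : Finset (Fin n)) := ha ▸ Finset.mem_singleton_self a
  simp only [Finset.mem_sdiff, Finset.mem_insert, Finset.mem_singleton, not_or] at haij
  refine ⟨a, haij.2.1, haij.2.2, ?_⟩
  have huni := Finset.union_sdiff_of_subset hsub
  rw [ha] at huni
  rw [← huni]
  ext x
  simp only [Finset.mem_union, Finset.mem_insert, Finset.mem_singleton]
  tauto

lemma exists_split {α : Type*} {p : α → Bool} {L : List α} (h : 0 < L.countP p) :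
    ∃ A x B, L = A ++ x :: B ∧ p x = true := by
  obtain ⟨x, hx, hpx⟩ := List.countP_pos_iff.mp h
  obtain ⟨A, B, rfl⟩ := List.append_of_mem hx
  exact ⟨A, x, B, rfl, hpx⟩

lemma exists_split2 {α : Type*} {p : α → Bool} {L : List α} (h : 2 ≤ L.countP p) :
    ∃ A t₁ B t₂ C, L = A ++ t₁ :: (B ++ t₂ :: C) ∧ p t₁ = true ∧ p t₂ = true := by
  obtain ⟨A, x, B, rfl, hpx⟩ := exists_split (show 0 < L.countP p by omega)
  simp only [List.countP_append, List.countP_cons, hpx, if_true] at h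
  by_cases hB : 0 < B.countP p
  · obtain ⟨B₁, y, B₂, rfl, hpy⟩ := exists_split hB
    exact ⟨A, x, B₁, y, B₂, rfl, hpx, hpy⟩
  · have hA : 0 < A.countP p := by omega
    obtain ⟨A₁, y, A₂, rfl, hpy⟩ := exists_split hA
    exact ⟨A₁, y, A₂, x, B, by simp, hpy, hpx⟩

set_option maxHeartbeats 1600000 in
lemma sq_step {i j : Fin n} (hij : i ≠ j) {T : List (Triplet n)} (hNV : NonVanishing T)
    (h2 : 2 ≤ T.countP (fun t => decide (i ∈ t.indices ∧ j ∈ t.indices))) :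
    ∃ T', SqMove i j T T' ∧ NonVanishing T' ∧
      T'.countP (fun t => decide (i ∈ t.indices ∧ j ∈ t.indices)) + 2
        = T.countP (fun t => decide (i ∈ t.indices ∧ j ∈ t.indices)) := by
  obtain ⟨A, t₁, B, t₂, C, hT, hp1, hp2⟩ := exists_split2 h2
  have m1 : i ∈ t₁.indices ∧ j ∈ t₁.indices := by simpa using hp1
  have m2 : i ∈ t₂.indices ∧ j ∈ t₂.indices := by simpa using hp2
  have ht1T : t₁ ∈ T := by rw [hT]; simp
  have ht2T : t₂ ∈ T := by rw [hT]; simp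
  obtain ⟨a, hai, haj, ha⟩ := exists_third hNV ht1T hij m1.1 m1.2
  obtain ⟨b, hbi, hbj, hb⟩ := exists_third hNV ht2T hij m2.1 m2.2
  have hsub12 : [t₁, t₂].Sublist T := by
    rw [hT]
    refine List.Sublist.trans ?_ (List.sublist_append_right A _)
    exact (List.Sublist.trans ((List.nil_sublist C).cons₂ t₂)
      (List.sublist_append_right B _)).cons₂ t₁
  have hab : a ≠ b := by
    intro hab
    subst hab
    have h4 := hNV [t₁, t₂] hsub12 (by simp)
    rw [show indexSet [t₁, t₂] = t₁.indices ∪ t₂.indices by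
      simp [indexSet_cons, indexSet_nil]] at h4
    rw [ha, hb, Finset.union_self] at h4
    simp only [List.length_cons, List.length_singleton] at h4
    have hle : ({i, j, a} : Finset (Fin n)).card ≤ 3 := by
      refine le_trans (Finset.card_insert_le _ _) ?_
      have h := Finset.card_insert_le j ({a} : Finset (Fin n))
      simp at h ⊢
      omega
    omega
  set u₁ : Triplet n := (i, a, b) with hu₁
  set u₂ : Triplet n := (j, a, b) with hu₂
  have hu1i : u₁.indices = {i, a, b} := rfl
  have hu2i : u₂.indices = {j, a, b} := rfl
  refine ⟨A ++ u₁ :: (B ++ u₂ :: C), ?_, ?_, ?_⟩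
  · exact ⟨A, B, C, t₁, t₂, u₁, u₂, a, b, hab, hai, haj, hbi, hbj, ha, hb,
      hu1i, hu2i, by rw [hT]; simp, by simp⟩
  · -- NonVanishing of the new collection
    intro S hS hSne
    rw [List.sublist_append_iff] at hS
    obtain ⟨SA, S₂, rfl, hSA, hS₂⟩ := hS
    rw [List.sublist_cons_iff] at hS₂
    have split2 : ∀ {S' : List (Triplet n)}, S'.Sublist (B ++ u₂ :: C) →
        ∃ SB SC, SB.Sublist B ∧ SC.Sublist C ∧ (S' = SB ++ SC ∨ S' = SB ++ u₂ :: SC) := by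
      intro S' h
      rw [List.sublist_append_iff] at h
      obtain ⟨SB, S₃, rfl, hSB, hS₃⟩ := h
      rw [List.sublist_cons_iff] at hS₃
      rcases hS₃ with h | ⟨SC, rfl, hSC⟩
      · exact ⟨SB, S₃, hSB, h, Or.inl rfl⟩
      · exact ⟨SB, SC, hSB, hSC, Or.inr rfl⟩
    have key : ∀ (SB SC : List (Triplet n)), SB.Sublist B → SC.Sublist C →
        (SA ++ t₁ :: (SB ++ t₂ :: SC)).Sublist T := by
      intro SB SC hSB hSC
      rw [hT]
      exact hSA.append ((hSB.append (hSC.cons₂ t₂)).cons₂ t₁)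
    rcases hS₂ with h | ⟨S₃, rfl, hS₃⟩
    · obtain ⟨SB, SC, hSB, hSC, hcase⟩ := split2 h
      rcases hcase with rfl | rfl
      · -- no u's present: directly a sublist of T
        apply hNV _ _ hSne
        rw [hT]
        exact hSA.append ((hSB.append (hSC.cons t₂)).cons t₁)
      · -- only u₂ present
        have hSub := key SB SC hSB hSC
        have hne : SA ++ t₁ :: (SB ++ t₂ :: SC) ≠ [] :=
          List.ne_nil_of_length_pos (by simp)
        have hcard := hNV _ hSub hne
        have hsubset : indexSet (SA ++ t₁ :: (SB ++ t₂ :: SC)) ⊆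
            insert i (indexSet (SA ++ (SB ++ u₂ :: SC))) := by
          simp only [indexSet_append, indexSet_cons, ha, hb, hu2i]
          intro x hx
          simp only [Finset.mem_union, Finset.mem_insert, Finset.mem_singleton] at hx ⊢
          tauto
        have hle := le_trans (Finset.card_le_card hsubset) (Finset.card_insert_le _ _)
        simp only [List.length_append, List.length_cons] at hcard ⊢
        omega
    · obtain ⟨SB, SC, hSB, hSC, hcase⟩ := split2 hS₃
      rcases hcase with rfl | rfl
      · -- only u₁ present
        have hSub := key SB SC hSB hSC
        have hne : SA ++ t₁ :: (SB ++ t₂ :: SC) ≠ [] :=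
          List.ne_nil_of_length_pos (by simp)
        have hcard := hNV _ hSub hne
        have hsubset : indexSet (SA ++ t₁ :: (SB ++ t₂ :: SC)) ⊆
            insert j (indexSet (SA ++ u₁ :: (SB ++ SC))) := by
          simp only [indexSet_append, indexSet_cons, ha, hb, hu1i]
          intro x hx
          simp only [Finset.mem_union, Finset.mem_insert, Finset.mem_singleton] at hx ⊢
          tauto
        have hle := le_trans (Finset.card_le_card hsubset) (Finset.card_insert_le _ _)
        simp only [List.length_append, List.length_cons] at hcard ⊢
        omega
      · -- both u₁ and u₂ present
        have hSub := key SB SC hSB hSC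
        have hne : SA ++ t₁ :: (SB ++ t₂ :: SC) ≠ [] :=
          List.ne_nil_of_length_pos (by simp)
        have hcard := hNV _ hSub hne
        have hsubset : indexSet (SA ++ t₁ :: (SB ++ t₂ :: SC)) ⊆
            indexSet (SA ++ u₁ :: (SB ++ u₂ :: SC)) := by
          simp only [indexSet_append, indexSet_cons, ha, hb, hu1i, hu2i]
          intro x hx
          simp only [Finset.mem_union, Finset.mem_insert, Finset.mem_singleton] at hx ⊢
          tauto
        have hle := Finset.card_le_card hsubset
        simp only [List.length_append, List.length_cons] at hcard ⊢
        omega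
  · -- count decreases by exactly 2
    have hpu₁ : (decide (i ∈ u₁.indices ∧ j ∈ u₁.indices)) = false := by
      simp only [decide_eq_false_iff_not, not_and]
      intro _ hjmem
      rw [hu1i] at hjmem
      simp only [Finset.mem_insert, Finset.mem_singleton] at hjmem
      rcases hjmem with h | h | h
      exacts [hij h.symm, haj h.symm, hbj h.symm]
    have hpu₂ : (decide (i ∈ u₂.indices ∧ j ∈ u₂.indices)) = false := by
      simp only [decide_eq_false_iff_not, not_and]
      intro himem _
      rw [hu2i] at himem
      simp only [Finset.mem_insert, Finset.mem_singleton] at himem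
      rcases himem with h | h | h
      exacts [hij h, hai h.symm, hbi h.symm]
    have hnu₁ : ¬(i ∈ u₁.indices ∧ j ∈ u₁.indices) := by simpa using hpu₁
    have hnu₂ : ¬(i ∈ u₂.indices ∧ j ∈ u₂.indices) := by simpa using hpu₂
    rw [hT]
    simp only [List.countP_append, List.countP_cons, decide_eq_true_eq]
    rw [if_pos m1, if_pos m2, if_neg hnu₁, if_neg hnu₂]
    omega

lemma reduce {i j : Fin n} (hij : i ≠ j) :
    ∀ c (T : List (Triplet n)),
      T.countP (fun t => decide (i ∈ t.indices ∧ j ∈ t.indices)) = c →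
      NonVanishing T →
      ∃ Tstar, Relation.ReflTransGen (fun X Y => SqMove i j X Y ∧ NonVanishing Y) T Tstar ∧
        Tstar.countP (fun t => decide (i ∈ t.indices ∧ j ∈ t.indices)) = c % 2 := by
  intro c
  induction c using Nat.strong_induction_on with
  | _ c ih =>
    intro T hc hNV
    by_cases h2 : 2 ≤ c
    · obtain ⟨T', hmove, hNV', hcount⟩ := sq_step hij hNV (by omega)
      obtain ⟨Tstar, hrel, hcs⟩ := ih (c - 2) (by omega) T' (by omega) hNV'
      exact ⟨Tstar, Relation.ReflTransGen.head ⟨hmove, hNV'⟩ hrel, by rw [hcs]; omega⟩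
    · exact ⟨T, Relation.ReflTransGen.refl, by omega⟩

end MHV

/-- reduction of a pair to its parity by square moves: any MHV collection
`T` satisfying the non-vanishing condition can be transformed, by a finite sequence of
square moves on the pair `{i,j}` each of whose results satisfies the non-vanishing
condition, into a collection `T*` in which `i` and `j` occur together in exactly one
triplet if `{i,j} ∈ D(T)`, and in no triplet if `{i,j} ∉ D(T)`. -/
theorem statement8 {n : ℕ} (hn : 3 ≤ n) (T : List (MHV.Triplet n))
    (hMHV : MHV.IsMHV n T) (hNV : MHV.NonVanishing T)
    (i j : Fin n) (hij : i ≠ j) :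
    ∃ Tstar : List (MHV.Triplet n),
      Relation.ReflTransGen (fun X Y => SqMove i j X Y ∧ MHV.NonVanishing Y) T Tstar ∧
      (MHV.InDoublets T i j →
        (Tstar.countP fun t =>
          decide (i ∈ MHV.Triplet.indices t ∧ j ∈ MHV.Triplet.indices t)) = 1) ∧
      (¬ MHV.InDoublets T i j →
        (Tstar.countP fun t =>
          decide (i ∈ MHV.Triplet.indices t ∧ j ∈ MHV.Triplet.indices t)) = 0) := by
  obtain ⟨Tstar, hrel, hcs⟩ := MHV.reduce hij _ T rfl hNV
  unfold MHV.InDoublets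
  refine ⟨Tstar, hrel, ?_, ?_⟩
  · intro hD
    rw [hcs, Nat.odd_iff.mp hD]
  · intro hD
    rw [hcs, Nat.not_odd_iff.mp hD]
end
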